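/- arXiv:1505.06059 — 7 statements merged into one kernel-verified Lean document; each statement's English description precedes it below -/
import Mathlib

section
/- Let G be a finite group. Every atom of the monoid B(G) of product-one sequences over G has length at most |G|; in particular, the large Davenport constant satisfies D(G) ≤ |G|. -/
/-- `S` is a product-one sequence over `G`: some ordering of its terms multiplies to `1`. -/
def IsProductOne {G : Type*} [Group G] (S : Multiset G) : Prop :=
  ∃ l : List G, (l : Multiset G) = S ∧ l.prod = 1

/-- The set of products `π(S)` of all orderings of the terms of `S`. -/
def piSet {G : Type*} [Group G] (S : Multiset G) : Set G :=
  {g | ∃ l : List G, (l : Multiset G) = S ∧ l.prod = g}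

/-- The set `Π(S)` of products of nontrivial subsequences of `S`. -/
def subseqProds {G : Type*} [Group G] (S : Multiset G) : Set G :=
  {g | ∃ T : Multiset G, T ≤ S ∧ T ≠ 0 ∧ g ∈ piSet T}

/-- `S` is product-one free. -/
def ProductOneFree {G : Type*} [Group G] (S : Multiset G) : Prop :=
  (1 : G) ∉ subseqProds S

/-- `S` is an atom of the monoid `B(G)` of product-one sequences: it is a nontrivial
product-one sequence that is not the concatenation of two nontrivial product-one sequences. -/
def IsPOAtom {G : Type*} [Group G] (S : Multiset G) : Prop :=
  IsProductOne S ∧ S ≠ 0 ∧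
    ∀ T₁ T₂ : Multiset G, IsProductOne T₁ → IsProductOne T₂ → T₁ + T₂ = S →
      T₁ = 0 ∨ T₂ = 0

/-- The large Davenport constant `D(G)`: the supremum of lengths of atoms of `B(G)`. -/
noncomputable def largeD (G : Type*) [Group G] : ℕ :=
  sSup {n : ℕ | ∃ S : Multiset G, IsPOAtom S ∧ Multiset.card S = n}

/-- The small Davenport constant `d(G)`: the supremum of lengths of product-one free
sequences over `G`. -/
noncomputable def smalld (G : Type*) [Group G] : ℕ :=
  sSup {n : ℕ | ∃ S : Multiset G, ProductOneFree S ∧ Multiset.card S = n}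

/-- Every atom of the monoid `B(G)` of product-one sequences over a finite group `G`
has length at most `|G|`; in particular `D(G) ≤ |G|`. -/
theorem stmt0 {G : Type*} [Group G] [Fintype G] :
    (∀ S : Multiset G, IsPOAtom S → Multiset.card S ≤ Fintype.card G) ∧
      largeD G ≤ Fintype.card G := by
  have main : ∀ S : Multiset G, IsPOAtom S → Multiset.card S ≤ Fintype.card G := by
    intro S hS
    by_contra h
    push_neg at h
    obtain ⟨⟨l, hl, hlp⟩, hS0, hatom⟩ := hS
    have hlen : Fintype.card G < l.length := by
      have : Multiset.card (l : Multiset G) = l.length := Multiset.coe_card l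
      rw [hl] at this; omega
    set f : Fin l.length → G := fun i => (l.take ((i : ℕ) + 1)).prod with hf
    have key : ∀ i j : Fin l.length, (i : ℕ) < (j : ℕ) → f i = f j → False := by
      intro i j hij hfij
      set A := l.take ((i : ℕ) + 1) with hA
      set M := (l.drop ((i : ℕ) + 1)).take ((j : ℕ) - (i : ℕ)) with hM
      set B := l.drop ((j : ℕ) + 1) with hB
      have h1 : l.take ((j : ℕ) + 1) = A ++ M := by
        rw [hA, hM, ← List.take_add]
        congr 1
        omega
      have hsplit : l = A ++ M ++ B := by
        rw [← h1, hB, List.take_append_drop]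
      have hMprod : M.prod = 1 := by
        have h2 : f j = f i * M.prod := by
          rw [hf]
          simp only
          rw [h1, List.prod_append]
        rw [← hfij] at h2
        have h3 : f i * 1 = f i * M.prod := by rw [mul_one]; exact h2
        exact (mul_left_cancel h3).symm
      have hABprod : (A ++ B).prod = 1 := by
        have : l.prod = A.prod * M.prod * B.prod := by
          rw [hsplit]; simp [List.prod_append, mul_assoc]
        rw [hlp, hMprod, mul_one] at this
        rw [List.prod_append, ← this]
      have hsum : ((A ++ B : List G) : Multiset G) + (M : Multiset G) = S := by
        rw [← hl, hsplit]
        simp only [← Multiset.coe_add]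
        abel
      have := hatom _ _ ⟨A ++ B, rfl, hABprod⟩ ⟨M, rfl, hMprod⟩ hsum
      have hAlen : A.length = (i : ℕ) + 1 := by
        rw [hA, List.length_take]; omega
      have hMlen : M.length = (j : ℕ) - (i : ℕ) := by
        rw [hM, List.length_take, List.length_drop]
        have := j.isLt
        omega
      rcases this with h' | h'
      · have : (A ++ B).length = 0 := by
          have := congrArg Multiset.card h'
          simpa using this
        rw [List.length_append] at this
        omega
      · have : M.length = 0 := by
          have := congrArg Multiset.card h'
          simpa using this
        omega
    obtain ⟨a, b, hab, hfab⟩ := Fintype.exists_ne_map_eq_of_card_lt f (by simpa using hlen)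
    rcases lt_or_gt_of_ne (fun h => hab (Fin.ext h) : (a : ℕ) ≠ (b : ℕ)) with h' | h'
    · exact key a b h' hfab
    · exact key b a h' hfab.symm
  refine ⟨main, ?_⟩
  apply csSup_le'
  rintro n ⟨S, hS, rfl⟩
  exact main S hS
end

section
/- Let G be a finite group with commutator subgroup G' = [G,G]. For sequences S and S' over G with g ∈ π(S) and g' ∈ π(S'), there exist product-one sequences C and C' over G such that S·C = S'·C' (concatenation of sequences) if and only if gG' = g'G'. In other words, two sequences over G lie in the same class of the quotient F(G)/B(G) exactly when their sets of products lie in the same coset of G', so that the class group F(G)/B(G) is isomorphic to G/G' via [S] ↦ gG' for g ∈ π(S). -/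
section Aux

variable {G : Type*} [Group G]

lemma mul_mem_piSet {a b : G} {S T : Multiset G} (ha : a ∈ piSet S) (hb : b ∈ piSet T) :
    a * b ∈ piSet (S + T) := by
  obtain ⟨l, hl, rfl⟩ := ha
  obtain ⟨m, hm, rfl⟩ := hb
  exact ⟨l ++ m, by rw [← hl, ← hm]; rfl, by simp⟩

lemma inv_mem_piSet {a : G} {S : Multiset G} (ha : a ∈ piSet S) :
    a⁻¹ ∈ piSet (S.map Inv.inv) := by
  obtain ⟨l, hl, rfl⟩ := ha
  refine ⟨(l.map Inv.inv).reverse, ?_, (List.prod_inv_reverse l).symm⟩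
  rw [← hl]
  exact Multiset.coe_eq_coe.mpr ((l.map Inv.inv).reverse_perm) |>.trans (by simp)

lemma exists_piSet_of_commutator {c : G} (hc : c ∈ commutator G) :
    ∃ K : Multiset G, c ∈ piSet K ∧ (1 : G) ∈ piSet K := by
  rw [commutator_eq_closure] at hc
  induction hc using Subgroup.closure_induction with
  | mem x hx =>
    obtain ⟨a, b, rfl⟩ := hx
    refine ⟨↑[a, b, a⁻¹, b⁻¹], ⟨[a, b, a⁻¹, b⁻¹], rfl, by
      simp [commutatorElement_def, mul_assoc]⟩, ⟨[a, a⁻¹, b, b⁻¹], ?_, by simp⟩⟩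
    exact Multiset.coe_eq_coe.mpr (List.Perm.cons a (List.Perm.swap _ _ _))
  | one => exact ⟨0, ⟨[], rfl, rfl⟩, ⟨[], rfl, rfl⟩⟩
  | mul x y _ _ hx hy =>
    obtain ⟨K₁, h1, h1'⟩ := hx
    obtain ⟨K₂, h2, h2'⟩ := hy
    exact ⟨K₁ + K₂, mul_mem_piSet h1 h2, by simpa using mul_mem_piSet h1' h2'⟩
  | inv x _ hx =>
    obtain ⟨K, h1, h1'⟩ := hx
    exact ⟨K.map Inv.inv, inv_mem_piSet h1, by simpa using inv_mem_piSet h1'⟩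

/-- The image in the abelianization of the product of a sequence, well-defined. -/
noncomputable def abProd (S : Multiset G) : Abelianization G :=
  (S.map Abelianization.of).prod

lemma abProd_eq {a : G} {S : Multiset G} (ha : a ∈ piSet S) :
    abProd S = Abelianization.of a := by
  obtain ⟨l, rfl, rfl⟩ := ha
  simp [abProd, map_list_prod]

lemma abProd_add (S T : Multiset G) : abProd (S + T) = abProd S * abProd T := by
  simp [abProd]

end Aux

/-- Two sequences `S, S'` over a finite group `G`, with `g ∈ π(S)` and `g' ∈ π(S')`,
lie in the same class of `F(G)/B(G)` (i.e. `S·C = S'·C'` for some product-one sequences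
`C, C'`) if and only if `g` and `g'` lie in the same coset of the commutator subgroup,
so that `[S] ↦ g[G,G]` gives the isomorphism `F(G)/B(G) ≅ G/[G,G]`. -/
theorem stmt4 {G : Type*} [Group G] [Finite G] (S S' : Multiset G) (g g' : G)
    (hg : g ∈ piSet S) (hg' : g' ∈ piSet S') :
    (∃ C C' : Multiset G, IsProductOne C ∧ IsProductOne C' ∧ S + C = S' + C') ↔
      (g : G ⧸ commutator G) = (g' : G ⧸ commutator G) := by
  constructor
  · rintro ⟨C, C', hC, hC', hEq⟩
    obtain ⟨c, hc, hc1⟩ := hC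
    obtain ⟨c', hc', hc1'⟩ := hC'
    have h1 : abProd C = 1 := by
      rw [abProd_eq (a := (1 : G)) ⟨c, hc, hc1⟩]; simp
    have h1' : abProd C' = 1 := by
      rw [abProd_eq (a := (1 : G)) ⟨c', hc', hc1'⟩]; simp
    have : Abelianization.of g = Abelianization.of g' := by
      have := congrArg abProd hEq
      rw [abProd_add, abProd_add, h1, h1', mul_one, mul_one,
        abProd_eq hg, abProd_eq hg'] at this
      exact this
    exact this
  · intro h
    have hcomm : g'⁻¹ * g ∈ commutator G := QuotientGroup.eq.mp h.symm
    obtain ⟨K₀, hK0, hK0'⟩ := exists_piSet_of_commutator hcomm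
    -- D := S⁻¹ + S'⁻¹ + ({g'} + K₀)
    set D : Multiset G := S.map Inv.inv + S'.map Inv.inv + ({g'} + K₀) with hD
    refine ⟨S' + D, S + D, ?_, ?_, by rw [hD]; abel⟩
    · -- ordering: S' · S'⁻¹ · (g' · K₀[c]) · S⁻¹ with prod g'·g'⁻¹·g'·c·g⁻¹ = 1
      have h1 : g' * g'⁻¹ * ((g' * (g'⁻¹ * g)) * g⁻¹) ∈
          piSet (S' + S'.map Inv.inv + (({g'} : Multiset G) + K₀ + S.map Inv.inv)) :=
        mul_mem_piSet (mul_mem_piSet hg' (inv_mem_piSet hg'))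
          (mul_mem_piSet (mul_mem_piSet ⟨[g'], rfl, by simp⟩ hK0) (inv_mem_piSet hg))
      have h2 : g' * g'⁻¹ * ((g' * (g'⁻¹ * g)) * g⁻¹) = 1 := by group
      rw [h2] at h1
      obtain ⟨l, hl, hlp⟩ := h1
      exact ⟨l, by rw [hl, hD]; abel, hlp⟩
    · -- ordering: S · S⁻¹ · (g' · K₀[1]) · S'⁻¹ with prod g·g⁻¹·g'·1·g'⁻¹ = 1
      have h1 : g * g⁻¹ * ((g' * 1) * g'⁻¹) ∈
          piSet (S + S.map Inv.inv + (({g'} : Multiset G) + K₀ + S'.map Inv.inv)) :=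
        mul_mem_piSet (mul_mem_piSet hg (inv_mem_piSet hg))
          (mul_mem_piSet (mul_mem_piSet ⟨[g'], rfl, by simp⟩ hK0') (inv_mem_piSet hg'))
      have h2 : g * g⁻¹ * ((g' * 1) * g'⁻¹) = 1 := by group
      rw [h2] at h1
      obtain ⟨l, hl, hlp⟩ := h1
      exact ⟨l, by rw [hl, hD]; abel, hlp⟩
end

section
/- Let G be a finite group. The submonoid B(G) of product-one sequences is saturated in the free abelian monoid F(G) — i.e., whenever S is a product-one sequence over G and T is a product-one sequence that is a subsequence of S, the complementary subsequence T^{-1}·S is again a product-one sequence — if and only if G is abelian. (Since a saturated submonoid of a free abelian monoid is Krull, this says B(G) is a Krull monoid if and only if G is abelian.) -/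
/-! If `G` is abelian, a sequence is product-one iff its (unordered) product is `1`, and products
are multiplicative along `S = T + (S - T)`. Conversely, if `a * b ≠ b * a`, the product-one sequence
`a · a⁻¹ · b · (a b a⁻¹)⁻¹` (ordered as `a b a⁻¹ (a b a⁻¹)⁻¹`) contains the product-one
subsequence `a · a⁻¹`, but its complement `b · (a b a⁻¹)⁻¹` is not product-one. -/

theorem isProductOne_iff_prod_eq_one {G : Type*} [CommGroup G] {S : Multiset G} :
    IsProductOne S ↔ S.prod = 1 := by
  refine ⟨fun ⟨l, hl, h⟩ => ?_, fun h => ⟨S.toList, S.coe_toList, by rwa [Multiset.prod_toList]⟩⟩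
  rwa [← hl, Multiset.prod_coe]

theorem IsProductOne.tsub {G : Type*} [CommGroup G] [DecidableEq G] {S T : Multiset G}
    (hS : IsProductOne S) (hT : IsProductOne T) (hTS : T ≤ S) : IsProductOne (S - T) := by
  rw [isProductOne_iff_prod_eq_one] at *
  rwa [← add_tsub_cancel_of_le hTS, Multiset.prod_add, hT, one_mul] at hS

theorem isProductOne_pair_iff {G : Type*} [Group G] {a b : G} :
    IsProductOne {a, b} ↔ a * b = 1 := by
  refine ⟨fun ⟨l, hl, h⟩ => ?_, fun h => ⟨[a, b], rfl, by simpa using h⟩⟩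
  rcases List.perm_pair.mp (Multiset.coe_eq_coe.mp hl) with rfl | rfl
  · simpa using h
  · simpa [mul_eq_one_comm] using h

theorem commute_of_isProductOne_tsub {G : Type*} [Group G] [DecidableEq G]
    (hsat : ∀ S T : Multiset G, IsProductOne S → IsProductOne T → T ≤ S → IsProductOne (S - T))
    (a b : G) : Commute a b := by
  have hS : IsProductOne ({a, a⁻¹} + {b, (a * b * a⁻¹)⁻¹}) :=
    ⟨[a, b, a⁻¹, (a * b * a⁻¹)⁻¹], Multiset.coe_eq_coe.mpr (.cons a (.swap _ _ _)), by simp⟩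
  have hcompl := hsat _ _ hS (isProductOne_pair_iff.mpr (mul_inv_cancel a)) le_self_add
  rw [add_tsub_cancel_left, isProductOne_pair_iff, mul_inv_eq_one, eq_mul_inv_iff_mul_eq] at hcompl
  exact hcompl.symm

theorem stmt5_general {G : Type*} [Group G] [DecidableEq G] :
    (∀ S T : Multiset G, IsProductOne S → IsProductOne T → T ≤ S →
        IsProductOne (S - T)) ↔
      (∀ a b : G, a * b = b * a) := by
  refine ⟨fun hsat a b => (commute_of_isProductOne_tsub hsat a b).eq, fun hcomm => ?_⟩
  let _ : CommGroup G := { mul_comm := hcomm }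
  exact fun S T hS hT hTS => hS.tsub hT hTS

/-- For a finite group `G`, the submonoid `B(G)` of product-one sequences is saturated in
the free abelian monoid `F(G)` (whenever a product-one sequence `T` is a subsequence of a
product-one sequence `S`, the complement `S - T` is again product-one) if and only if `G`
is abelian. -/
theorem stmt5 {G : Type*} [Group G] [Finite G] [DecidableEq G] :
    (∀ S T : Multiset G, IsProductOne S → IsProductOne T → T ≤ S →
        IsProductOne (S - T)) ↔
      (∀ a b : G, a * b = b * a) :=
  stmt5_general
end

section
/- Let G be a finite group. Every nontrivial product-one sequence over G is a concatenation of finitely many prime elements of the monoid B(G) (that is, B(G) is a factorial monoid) if and only if |G| ≤ 2. -/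
/-- `p` divides `a` inside the monoid `B(G)`. -/
def BDvd {G : Type*} [Group G] (p a : Multiset G) : Prop :=
  ∃ c : Multiset G, IsProductOne c ∧ p + c = a

/-- `p` is a prime element of the monoid `B(G)` of product-one sequences. -/
def BPrime {G : Type*} [Group G] (p : Multiset G) : Prop :=
  IsProductOne p ∧ p ≠ 0 ∧
    ∀ a b : Multiset G, IsProductOne a → IsProductOne b →
      BDvd p (a + b) → BDvd p a ∨ BDvd p b

section Aux
variable {G : Type*} [Group G]

lemma po_zero : IsProductOne (0 : Multiset G) := ⟨[], rfl, rfl⟩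

lemma po_add {S T : Multiset G} (hS : IsProductOne S) (hT : IsProductOne T) :
    IsProductOne (S + T) := by
  obtain ⟨l, hl, hp⟩ := hS; obtain ⟨m, hm, hq⟩ := hT
  exact ⟨l ++ m, by rw [← hl, ← hm]; rfl, by simp [hp, hq]⟩

lemma po_singleton {g : G} (h : IsProductOne ({g} : Multiset G)) : g = 1 := by
  obtain ⟨l, hl, hp⟩ := h
  rw [Multiset.coe_eq_singleton] at hl; subst hl; simpa using hp

lemma list_prod_eq_pow [DecidableEq G] (hu : ∀ x y : G, x ≠ 1 → y ≠ 1 → x = y)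
    {a : G} (ha : a ≠ 1) : ∀ l : List G, l.prod = a ^ l.count a
  | [] => by simp
  | (b :: l) => by
    rcases eq_or_ne b a with rfl | hb
    · rw [List.prod_cons, list_prod_eq_pow hu ha l, List.count_cons_self, pow_succ']
    · have hb1 : b = 1 := by by_contra h; exact hb (hu b a h ha)
      rw [List.prod_cons, list_prod_eq_pow hu ha l, hb1, one_mul]
      simp [List.count_cons, Ne.symm ha]

lemma po_iff [DecidableEq G] (hu : ∀ x y : G, x ≠ 1 → y ≠ 1 → x = y)
    (h2 : ∀ x : G, x * x = 1) {S : Multiset G} :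
    IsProductOne S ↔ ∀ x : G, x ≠ 1 → Even (S.count x) := by
  have key : ∀ (x : G), x ≠ 1 → ∀ n : ℕ, (x ^ n = 1 ↔ Even n) := by
    intro x hx n
    have ho : orderOf x = 2 := by
      have : Fact (Nat.Prime 2) := ⟨Nat.prime_two⟩
      exact orderOf_eq_prime (by rw [sq]; exact h2 x) hx
    rw [← orderOf_dvd_iff_pow_eq_one, ho, Nat.even_iff]
    omega
  constructor
  · rintro ⟨l, hl, hp⟩ x hx
    have h1 := list_prod_eq_pow hu hx l
    rw [hp] at h1
    have hc : S.count x = l.count x := by rw [← hl]; simp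
    rw [hc]; exact (key x hx _).1 h1.symm
  · intro h
    refine ⟨S.toList, S.coe_toList, ?_⟩
    by_cases hall : ∀ b ∈ S.toList, b = 1
    · exact List.prod_eq_one hall
    · push_neg at hall; obtain ⟨a, _, ha⟩ := hall
      rw [list_prod_eq_pow hu ha S.toList]
      refine (key a ha _).2 ?_
      have hc : (S.toList).count a = S.count a := by
        rw [← Multiset.coe_count, S.coe_toList]
      rw [hc]; exact h a ha

end Aux

section Aux2
variable {G : Type*} [Group G] [DecidableEq G]
  (hu : ∀ x y : G, x ≠ 1 → y ≠ 1 → x = y) (h2 : ∀ x : G, x * x = 1)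

include hu h2

lemma bprime_one : BPrime ({1} : Multiset G) := by
  refine ⟨⟨[1], rfl, by simp⟩, by simp, ?_⟩
  rintro a b ha hb ⟨c, hc, hsum⟩
  have h1 : (1:G) ∈ a + b := by rw [← hsum]; simp
  have key : ∀ u : Multiset G, IsProductOne u → (1:G) ∈ u → BDvd {1} u := by
    intro u hu' h1u
    refine ⟨u.erase 1, ?_, ?_⟩
    · rw [po_iff hu h2] at hu' ⊢
      intro x hx
      rw [Multiset.count_erase_of_ne hx]
      exact hu' x hx
    · rw [Multiset.singleton_add]; exact Multiset.cons_erase h1u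
  rcases Multiset.mem_add.1 h1 with h | h
  · exact Or.inl (key a ha h)
  · exact Or.inr (key b hb h)

lemma bdvd_pair_of_two_le {a : G} (ha : a ≠ 1) {w : Multiset G}
    (hw : IsProductOne w) (h2w : 2 ≤ w.count a) : BDvd (a ::ₘ a ::ₘ 0) w := by
  have hle : (a ::ₘ a ::ₘ 0 : Multiset G) ≤ w := by
    rw [Multiset.le_iff_count]
    intro x
    by_cases hx : x = a
    · subst hx; simpa using h2w
    · simp [Multiset.count_cons, hx]
  refine ⟨w - (a ::ₘ a ::ₘ 0), ?_, add_tsub_cancel_of_le hle⟩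
  rw [po_iff hu h2] at hw ⊢
  intro x hx
  rw [Multiset.count_sub]
  by_cases hxa : x = a
  · subst hxa
    obtain ⟨k, hk⟩ := hw x hx
    refine ⟨k - 1, ?_⟩
    simp only [Multiset.count_cons_self, Multiset.count_zero]
    omega
  · simpa [Multiset.count_cons, hxa] using hw x hx

lemma bprime_pair {a : G} (ha : a ≠ 1) : BPrime (a ::ₘ a ::ₘ 0 : Multiset G) := by
  refine ⟨⟨[a, a], rfl, by simp [h2 a]⟩, by simp, ?_⟩
  rintro u v hu' hv' ⟨c, hc, hsum⟩
  have hcount : 2 ≤ (u+v).count a := by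
    rw [← hsum]
    simp [Multiset.count_cons_self]
  rw [Multiset.count_add] at hcount
  obtain ⟨k, hk⟩ := (po_iff hu h2).1 hu' a ha
  rcases Nat.lt_or_ge (u.count a) 2 with h | h
  · exact Or.inr (bdvd_pair_of_two_le hu h2 ha hv' (by omega))
  · exact Or.inl (bdvd_pair_of_two_le hu h2 ha hu' h)

lemma po_factor : ∀ n (S : Multiset G), Multiset.card S = n → IsProductOne S →
    ∃ L : Multiset (Multiset G), (∀ p ∈ L, BPrime p) ∧ L.sum = S := by
  intro n
  induction n using Nat.strong_induction_on with
  | _ n ih =>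
    intro S hcard hS
    rcases Multiset.empty_or_exists_mem S with rfl | ⟨g, hg⟩
    · exact ⟨0, by simp, by simp⟩
    rcases eq_or_ne g 1 with rfl | hg1
    · have hps' : IsProductOne (S.erase 1) := by
        rw [po_iff hu h2] at hS ⊢
        intro x hx; rw [Multiset.count_erase_of_ne hx]; exact hS x hx
      have hlt : Multiset.card (S.erase 1) < n := by
        rw [← hcard]; exact Multiset.card_erase_lt_of_mem hg
      obtain ⟨L, hL, hsum⟩ := ih _ hlt _ rfl hps'
      refine ⟨{1} ::ₘ L, ?_, ?_⟩
      · intro p hp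
        rcases Multiset.mem_cons.1 hp with rfl | hp
        · exact bprime_one hu h2
        · exact hL p hp
      · rw [Multiset.sum_cons, hsum, Multiset.singleton_add, Multiset.cons_erase hg]
    · have h2c : 2 ≤ S.count g := by
        obtain ⟨k, hk⟩ := (po_iff hu h2).1 hS g hg1
        have h1 : 1 ≤ S.count g := Multiset.one_le_count_iff_mem.2 hg
        omega
      obtain ⟨c, hcpo, hsum2⟩ := bdvd_pair_of_two_le hu h2 hg1 hS h2c
      have hlt : Multiset.card c < n := by
        have := congrArg Multiset.card hsum2
        simp only [Multiset.card_add, Multiset.card_cons, Multiset.card_zero] at this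
        omega
      obtain ⟨L, hL, hsum⟩ := ih _ hlt _ rfl hcpo
      refine ⟨(g ::ₘ g ::ₘ 0) ::ₘ L, ?_, ?_⟩
      · intro p hp
        rcases Multiset.mem_cons.1 hp with rfl | hp
        · exact bprime_pair hu h2 hg1
        · exact hL p hp
      · rw [Multiset.sum_cons, hsum, hsum2]

end Aux2

/-- For a finite group `G`, every nontrivial product-one sequence over `G` is a
concatenation of finitely many prime elements of `B(G)` (i.e. `B(G)` is factorial) if and
only if `|G| ≤ 2`. -/
theorem stmt6 {G : Type*} [Group G] [Fintype G] :
    (∀ S : Multiset G, IsProductOne S → S ≠ 0 →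
        ∃ L : Multiset (Multiset G), (∀ p ∈ L, BPrime p) ∧ L.sum = S) ↔
      Fintype.card G ≤ 2 := by
  classical
  constructor
  · intro h
    by_contra hc
    push_neg at hc
    rw [Fintype.two_lt_card_iff] at hc
    obtain ⟨x, y, hx1, hUle, hVle⟩ : ∃ x y : G, x ≠ 1 ∧
        ¬((x ::ₘ x⁻¹ ::ₘ 0 : Multiset G) ≤ (x ::ₘ y ::ₘ (x*y)⁻¹ ::ₘ 0)) ∧
        ¬((x ::ₘ x⁻¹ ::ₘ 0 : Multiset G) ≤ ((x*y) ::ₘ y⁻¹ ::ₘ x⁻¹ ::ₘ 0)) := by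
      by_cases hex : ∃ g : G, g * g ≠ 1
      · obtain ⟨g, hg⟩ := hex
        have hg1 : g ≠ 1 := fun e => hg (by rw [e]; simp)
        have hgi : g⁻¹ ≠ g := fun e => hg (by nth_rewrite 2 [← e]; simp)
        have hgi2 : g⁻¹ ≠ (g*g)⁻¹ := by
          intro e
          have : g = g * g := inv_injective e
          exact hg1 (mul_left_cancel (a := g) (by rw [← this, mul_one]))
        have hgs : g ≠ g * g := fun e =>
          hg1 (mul_left_cancel (a := g) (by rw [← e, mul_one]))
        refine ⟨g, g, hg1, ?_, ?_⟩
        · intro hle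
          have hmem : g⁻¹ ∈ (g ::ₘ g ::ₘ (g*g)⁻¹ ::ₘ 0 : Multiset G) :=
            Multiset.mem_of_le hle (by simp)
          simp only [Multiset.mem_cons, Multiset.notMem_zero, or_false] at hmem
          rcases hmem with e | e | e
          exacts [hgi e, hgi e, hgi2 e]
        · intro hle
          have hmem : g ∈ ((g*g) ::ₘ g⁻¹ ::ₘ g⁻¹ ::ₘ 0 : Multiset G) :=
            Multiset.mem_of_le hle (by simp)
          simp only [Multiset.mem_cons, Multiset.notMem_zero, or_false] at hmem
          rcases hmem with e | e | e
          exacts [hgs e, hgi e.symm, hgi e.symm]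
      · push_neg at hex
        obtain ⟨a, b, c, hab, hac, hbc⟩ := hc
        obtain ⟨u, v, hu1, hv1, huv⟩ : ∃ u v : G, u ≠ 1 ∧ v ≠ 1 ∧ u ≠ v := by
          rcases eq_or_ne a 1 with rfl | ha
          · exact ⟨b, c, Ne.symm hab, Ne.symm hac, hbc⟩
          rcases eq_or_ne b 1 with rfl | hb
          · exact ⟨a, c, ha, Ne.symm hbc, hac⟩
          · exact ⟨a, b, ha, hb, hab⟩
        have hui : u⁻¹ = u := inv_eq_of_mul_eq_one_right (hex u)
        have hvi : v⁻¹ = u → False := fun e => huv ((inv_eq_of_mul_eq_one_right (hex v) ▸ e).symm)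
        have huvne : u * v ≠ u := fun e => hv1 (mul_left_cancel (a := u) (by rw [e, mul_one]))
        have huvine : (u * v)⁻¹ ≠ u := by
          intro e
          have : u * v = u⁻¹ := inv_injective (by rw [e, inv_inv])
          rw [hui] at this
          exact huvne this
        refine ⟨u, v, hu1, ?_, ?_⟩
        · intro hle
          have hcnt := Multiset.le_iff_count.1 hle u
          rw [hui, Multiset.count_cons_self, Multiset.count_cons_self, Multiset.count_zero,
            Multiset.count_cons_self, Multiset.count_cons_of_ne huv,
            Multiset.count_cons_of_ne (Ne.symm huvine), Multiset.count_zero] at hcnt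
          omega
        · intro hle
          have hcnt := Multiset.le_iff_count.1 hle u
          rw [hui, Multiset.count_cons_self, Multiset.count_cons_self, Multiset.count_zero,
            Multiset.count_cons_of_ne (Ne.symm huvne),
            Multiset.count_cons_of_ne (fun e => hvi e.symm), Multiset.count_cons_self,
            Multiset.count_zero] at hcnt
          omega
    set W : Multiset G := x ::ₘ x⁻¹ ::ₘ 0 with hWdef
    set U : Multiset G := x ::ₘ y ::ₘ (x*y)⁻¹ ::ₘ 0 with hUdef
    set V : Multiset G := (x*y) ::ₘ y⁻¹ ::ₘ x⁻¹ ::ₘ 0 with hVdef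
    have hWpo : IsProductOne W := ⟨[x, x⁻¹], rfl, by simp⟩
    have hUpo : IsProductOne U := ⟨[x, y, (x*y)⁻¹], rfl, by simp [mul_assoc]⟩
    have hVpo : IsProductOne V := ⟨[x*y, y⁻¹, x⁻¹], rfl, by
      simp only [List.prod_cons, List.prod_nil, mul_one]; group⟩
    have hWnp : ¬ BPrime W := by
      rintro ⟨-, -, hpr⟩
      have hdvd : BDvd W (U + V) := by
        refine ⟨y ::ₘ y⁻¹ ::ₘ (x*y) ::ₘ (x*y)⁻¹ ::ₘ 0,
          ⟨[y, y⁻¹, x*y, (x*y)⁻¹], rfl, by simp [mul_assoc]⟩, ?_⟩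
        ext g
        simp only [hWdef, hUdef, hVdef, Multiset.count_add, Multiset.count_cons,
          Multiset.count_zero]
        split_ifs <;> omega
      rcases hpr U V hUpo hVpo hdvd with ⟨d, -, hd⟩ | ⟨d, -, hd⟩
      · exact hUle (Multiset.le_iff_exists_add.2 ⟨d, hd.symm⟩)
      · exact hVle (Multiset.le_iff_exists_add.2 ⟨d, hd.symm⟩)
    obtain ⟨L, hL, hsum⟩ := h W hWpo (by simp [hWdef])
    have hLne : L ≠ 0 := by
      rintro rfl
      rw [Multiset.sum_zero] at hsum
      exact (by simp [hWdef] : W ≠ 0) hsum.symm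
    obtain ⟨p, hp⟩ := Multiset.exists_mem_of_ne_zero hLne
    have hpp := hL p hp
    have hrest : p + (L.erase p).sum = W := by
      rw [← Multiset.sum_cons, Multiset.cons_erase hp]; exact hsum
    have hcards : Multiset.card p + Multiset.card ((L.erase p).sum) = 2 := by
      have := congrArg Multiset.card hrest
      simpa [hWdef] using this
    have hp1 : 1 ≤ Multiset.card p := Multiset.card_pos.2 hpp.2.1
    rcases Nat.lt_or_ge (Multiset.card p) 2 with hlt | hge
    · have hc1 : Multiset.card p = 1 := by omega
      obtain ⟨g, rfl⟩ := Multiset.card_eq_one.1 hc1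
      have hg1 : g = 1 := po_singleton hpp.1
      subst hg1
      have hmem : (1:G) ∈ W := by rw [← hrest]; simp
      simp only [hWdef, Multiset.mem_cons, Multiset.notMem_zero, or_false] at hmem
      rcases hmem with e | e
      · exact hx1 e.symm
      · exact hx1 (by rw [← inv_inv x, ← e, inv_one])
    · have h0 : Multiset.card ((L.erase p).sum) = 0 := by omega
      rw [Multiset.card_eq_zero] at h0
      rw [h0, add_zero] at hrest
      exact hWnp (hrest ▸ hpp)
  · intro hcard S hS _
    have hu : ∀ x y : G, x ≠ 1 → y ≠ 1 → x = y := by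
      intro x y hx hy
      by_contra hxy
      exact absurd (Fintype.two_lt_card_iff.2 ⟨x, y, 1, hxy, hx, hy⟩) (by omega)
    have h2 : ∀ x : G, x * x = 1 := by
      intro x
      by_contra hx
      have hx1 : x ≠ 1 := fun e => hx (by rw [e]; simp)
      have hxx1 : x * x ≠ 1 := hx
      have := hu x (x * x) hx1 hxx1
      exact hx1 (mul_left_cancel (a := x) (by rw [← this, mul_one]))
    exact po_factor hu h2 _ S rfl hS
end

section
/- Let G be a finite group and G₀ ⊆ G a subset such that for each two elements g, h ∈ G₀, the cyclic subgroup ⟨h⟩ is normal in ⟨g,h⟩ or the cyclic subgroup ⟨g⟩ is normal in ⟨g,h⟩. Then B(G₀) is a saturated submonoid of the free abelian monoid F(G₀) (equivalently, B(G₀) is a Krull monoid) if and only if the subgroup ⟨G₀⟩ generated by G₀ is abelian. -/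
/-!
If `⟨G₀⟩` is abelian, the product of a sequence does not depend on the ordering, so removing a
product-one subsequence from a product-one sequence leaves a product-one sequence.

Conversely, let `g, h ∈ G₀` with `h` normalizing `⟨g⟩`, say `h g = g^k h` with
`1 ≤ k ≤ n = ord g`. Then `T = g^(n-k+1) h^(ord h)` is product-one, via the ordering
`h g h^(ord h - 1) g^(n-k)`, and so is `g^(k-1) T = g^n h^(ord h)`. Saturation makes `g^(k-1)`
product-one, so `n ∣ k - 1` and `k = 1`: `g` and `h` commute. By the hypothesis on `G₀` every
pair of elements of `G₀` is of this form.
-/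

open Multiset Subgroup

section ProductOne

variable {G : Type*} [Group G]

theorem isProductOne_replicate_iff {g : G} {n : ℕ} :
    IsProductOne (replicate n g) ↔ orderOf g ∣ n := by
  refine ⟨?_, fun hdvd => ⟨List.replicate n g, coe_replicate n g, ?_⟩⟩
  · rintro ⟨l, hl, hprod⟩
    rw [← coe_replicate, coe_eq_coe, List.perm_replicate] at hl
    rw [hl, List.prod_replicate] at hprod
    exact orderOf_dvd_of_pow_eq_one hprod
  · rw [List.prod_replicate, orderOf_dvd_iff_pow_eq_one.mp hdvd]

theorem isProductOne_replicate_add_replicate {g h : G} {a b : ℕ} (ha : g ^ a = 1)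
    (hb : h ^ b = 1) : IsProductOne (replicate a g + replicate b h) :=
  ⟨List.replicate a g ++ List.replicate b h, by rw [← coe_add, coe_replicate, coe_replicate],
    by rw [List.prod_append, List.prod_replicate, List.prod_replicate, ha, hb, one_mul]⟩

theorem isProductOne_replicate_add_replicate_of_mul_eq_pow_mul {g h : G} {n k m : ℕ}
    (hgn : g ^ n = 1) (hhm : h ^ (m + 1) = 1) (hkn : k ≤ n) (hhg : h * g = g ^ k * h) :
    IsProductOne (replicate (n - k + 1) g + replicate (m + 1) h) := by
  refine ⟨h :: g :: (List.replicate m h ++ List.replicate (n - k) g), ?_, ?_⟩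
  · rw [← cons_coe, ← cons_coe, ← coe_add, coe_replicate, coe_replicate, replicate_succ,
      replicate_succ, add_comm]
    simp only [add_cons, cons_add]
  · calc (h :: g :: (List.replicate m h ++ List.replicate (n - k) g)).prod
        = h * g * h ^ m * g ^ (n - k) := by simp [mul_assoc]
      _ = g ^ k * h ^ (m + 1) * g ^ (n - k) := by rw [hhg, pow_succ', mul_assoc (g ^ k)]
      _ = g ^ n := by rw [hhm, mul_one, ← pow_add, Nat.add_sub_cancel' hkn]
      _ = 1 := hgn

theorem IsProductOne.sub_of_pairwise_commute [DecidableEq G] {S T : Multiset G}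
    (hcomm : ∀ x ∈ S, ∀ y ∈ S, Commute x y) (hS : IsProductOne S) (hT : IsProductOne T)
    (hTS : T ≤ S) : IsProductOne (S - T) := by
  obtain ⟨lS, rfl, hlS⟩ := hS
  obtain ⟨lT, rfl, hlT⟩ := hT
  refine ⟨(↑lS - ↑lT : Multiset G).toList, coe_toList _, ?_⟩
  set R := (↑lS - ↑lT : Multiset G).toList
  have hperm : List.Perm (lT ++ R) lS := by
    rw [← coe_eq_coe, ← coe_add, coe_toList, add_tsub_cancel_of_le hTS]
  have hpair : (lT ++ R).Pairwise Commute := List.pairwise_of_forall_mem_list fun x hx y hy =>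
    hcomm x (hperm.subset hx) y (hperm.subset hy)
  rw [← hlS, ← hperm.prod_eq' hpair, List.prod_append, hlT, one_mul]

theorem exists_mul_eq_pow_mul_of_mem_normalizer_zpowers [Finite G] {g h : G}
    (hh : h ∈ normalizer (zpowers g : Set G)) :
    ∃ k, 1 ≤ k ∧ k ≤ orderOf g ∧ h * g = g ^ k * h := by
  classical
  have hconj : h * g * h⁻¹ ∈ zpowers g := (mem_normalizer_iff.mp hh g).mp (mem_zpowers g)
  obtain ⟨k, hk, hgk⟩ := Finset.mem_image.mp (mem_zpowers_iff_mem_range_orderOf.mp hconj)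
  have hmul : h * g = g ^ k * h := by rw [hgk, inv_mul_cancel_right]
  rcases Nat.eq_zero_or_pos k with rfl | hk0
  · exact ⟨orderOf g, orderOf_pos g, le_rfl, by rwa [pow_orderOf_eq_one, ← pow_zero g]⟩
  · exact ⟨k, hk0, (Finset.mem_range.mp hk).le, hmul⟩

theorem commute_of_forall_isProductOne_sub [Finite G] [DecidableEq G] {G₀ : Set G}
    (hsat : ∀ S T : Multiset G, (∀ x ∈ S, x ∈ G₀) → (∀ x ∈ T, x ∈ G₀) →
        IsProductOne S → IsProductOne T → T ≤ S → IsProductOne (S - T))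
    {g h : G} (hg : g ∈ G₀) (hh : h ∈ G₀) (hnorm : h ∈ normalizer (zpowers g : Set G)) :
    Commute g h := by
  obtain ⟨k, hk1, hkn, hhg⟩ := exists_mul_eq_pow_mul_of_mem_normalizer_zpowers hnorm
  obtain ⟨m, hm⟩ := Nat.exists_eq_add_one_of_ne_zero (orderOf_pos h).ne'
  set n := orderOf g
  set T := replicate (n - k + 1) g + replicate (m + 1) h
  have hmem : ∀ a b, ∀ x ∈ replicate a g + replicate b h, x ∈ G₀ := by
    simp only [mem_add, mem_replicate]
    rintro a b x (⟨-, rfl⟩ | ⟨-, rfl⟩) <;> assumption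
  have hhm : h ^ (m + 1) = 1 := hm ▸ pow_orderOf_eq_one h
  have hT : IsProductOne T :=
    isProductOne_replicate_add_replicate_of_mul_eq_pow_mul (pow_orderOf_eq_one g) hhm hkn hhg
  have hTS : replicate (k - 1) g + T = replicate n g + replicate (m + 1) h := by
    rw [← add_assoc, ← replicate_add, show k - 1 + (n - k + 1) = n by omega]
  have hdvd : n ∣ k - 1 := by
    rw [← isProductOne_replicate_iff, ← add_tsub_cancel_right (replicate (k - 1) g) T, hTS]
    exact hsat _ T (hmem _ _) (hmem _ _)
      (isProductOne_replicate_add_replicate (pow_orderOf_eq_one g) hhm) hT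
      (hTS ▸ le_add_left le_rfl)
  have hk : k = 1 := by
    have := Nat.eq_zero_of_dvd_of_lt hdvd (by omega)
    omega
  rw [hk, pow_one] at hhg
  exact hhg.symm

end ProductOne

/-- Let `G₀ ⊆ G` be a subset of a finite group such that for each `g, h ∈ G₀`, `⟨h⟩` is
normal in `⟨g, h⟩` or `⟨g⟩` is normal in `⟨g, h⟩`. Then `B(G₀)` is saturated in the free
abelian monoid `F(G₀)` (equivalently, `B(G₀)` is Krull) if and only if `⟨G₀⟩` is abelian. -/
theorem stmt7 {G : Type*} [Group G] [Finite G] [DecidableEq G] (G₀ : Set G)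
    (hP : ∀ g ∈ G₀, ∀ h ∈ G₀,
        Subgroup.closure {g, h} ≤ Subgroup.normalizer (Subgroup.zpowers h : Set G) ∨
        Subgroup.closure {g, h} ≤ Subgroup.normalizer (Subgroup.zpowers g : Set G)) :
    (∀ S T : Multiset G, (∀ x ∈ S, x ∈ G₀) → (∀ x ∈ T, x ∈ G₀) →
        IsProductOne S → IsProductOne T → T ≤ S → IsProductOne (S - T)) ↔
      (∀ a ∈ Subgroup.closure G₀, ∀ b ∈ Subgroup.closure G₀, a * b = b * a) := by
  refine ⟨fun hsat a ha b hb => ?_, fun hab S T hS _ hSpo hTpo hTS => ?_⟩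
  · have hcomm : ∀ x ∈ G₀, ∀ y ∈ G₀, x * y = y * x := by
      intro g hg h hh
      rcases hP g hg h hh with hc | hc
      · exact (commute_of_forall_isProductOne_sub hsat hh hg (hc (subset_closure (by simp)))).symm
      · exact commute_of_forall_isProductOne_sub hsat hg hh (hc (subset_closure (by simp)))
    have := isMulCommutative_closure hcomm
    exact setLike_mul_comm ha hb
  · exact hSpo.sub_of_pairwise_commute
      (fun x hx y hy => hab x (subset_closure (hS x hx)) y (subset_closure (hS y hy))) hTpo hTS
end

section
/- Let G be a finite group, N a normal subgroup of G, and k, ℓ ∈ ℕ. Then d_k(N) + d_ℓ(G/N) ≤ d_{k+ℓ−1}(G). -/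
/-- `S` is divisible in `F(G)` by a concatenation of `k` nontrivial product-one sequences. -/
def DividesKProducts {G : Type*} [Group G] (k : ℕ) (S : Multiset G) : Prop :=
  ∃ f : Fin k → Multiset G,
    (∀ i, f i ≠ 0 ∧ IsProductOne (f i)) ∧ (∑ i, f i) ≤ S

/-- The small `k`-th Davenport constant `d_k(G)`. -/
noncomputable def smalldk (G : Type*) [Group G] (k : ℕ) : ℕ :=
  sSup {n : ℕ | ∃ S : Multiset G, ¬ DividesKProducts k S ∧ Multiset.card S = n}

/-- Every factorization of `S` into nontrivial product-one sequences has at most `k` factors. -/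
def MaxFactLe {G : Type*} [Group G] (k : ℕ) (S : Multiset G) : Prop :=
  ∀ (m : ℕ) (f : Fin m → Multiset G),
    (∀ i, f i ≠ 0 ∧ IsProductOne (f i)) → (∑ i, f i) = S → m ≤ k

/-- The large `k`-th Davenport constant `D_k(G)`. -/
noncomputable def largeDk (G : Type*) [Group G] (k : ℕ) : ℕ :=
  sSup {n : ℕ | ∃ S : Multiset G, IsProductOne S ∧ MaxFactLe k S ∧ Multiset.card S = n}

/-!
Take `S₁` over `N` of length `d_k(N)` without `k` disjoint product-one subsequences and `S₂`
over `G/N` of length `d_ℓ(G/N)` without `ℓ` of them, and consider `S₁` together with a lift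
of `S₂` as a sequence over `G`. Each factor of a product of `k + ℓ - 1` nontrivial product-one
subsequences splits into a part from `S₁` and a part from the lift; the latter maps to a
product-one sequence over `G/N` because the former maps to ones. So fewer than `ℓ` factors meet
the lift, and the remaining `k` or more lie in `S₁`, a contradiction either way.
-/

open Function Multiset

theorem Multiset.map_map_invFun_of_le_map {α β : Type*} [Nonempty α] {f : α → β}
    {S : Multiset α} {T : Multiset β} (h : T ≤ S.map f) : (T.map (invFun f)).map f = T := by
  rw [map_map]
  conv_rhs => rw [← map_id T]
  refine map_congr rfl fun y hy => invFun_eq ?_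
  obtain ⟨x, -, rfl⟩ := mem_map.1 (mem_of_le h hy)
  exact ⟨x, rfl⟩

theorem Multiset.map_finsetSum {α β ι : Type*} (f : α → β) (s : Finset ι)
    (T : ι → Multiset α) : (∑ i ∈ s, T i).map f = ∑ i ∈ s, (T i).map f :=
  _root_.map_sum (mapAddMonoidHom f) T s

section ProductOne

variable {G H : Type*} [Group G] [Group H]

theorem IsProductOne.map (f : G →* H) {S : Multiset G} (h : IsProductOne S) :
    IsProductOne (S.map f) := by
  obtain ⟨l, rfl, hl⟩ := h
  exact ⟨l.map f, rfl, by rw [← map_list_prod, hl, map_one]⟩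

theorem IsProductOne.of_map_of_injective {f : G →* H} (hf : Injective f) {S : Multiset G}
    (h : IsProductOne (S.map f)) : IsProductOne S := by
  obtain ⟨l, hlS, hl⟩ := h
  have hlift : (l.map (invFun f)).map f = l := by
    rw [List.map_map]
    conv_rhs => rw [← List.map_id l]
    refine List.map_congr_left fun y hy => invFun_eq ?_
    obtain ⟨x, -, rfl⟩ := mem_map.1 (hlS ▸ mem_coe.2 hy)
    exact ⟨x, rfl⟩
  refine ⟨l.map (invFun f), ?_, ?_⟩
  · rw [← map_coe, hlS, map_map, invFun_comp hf, map_id]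
  · rw [← (map_eq_one_iff f hf), map_list_prod, hlift, hl]

theorem IsProductOne.of_one_cons {S : Multiset G} (h : IsProductOne ((1 : G) ::ₘ S)) :
    IsProductOne S := by
  obtain ⟨l, hlS, hl⟩ := h
  obtain ⟨u, v, rfl⟩ := List.append_of_mem (mem_coe.1 (hlS ▸ mem_cons_self 1 S))
  refine ⟨u ++ v, (cons_inj_right 1).1 ?_, by simpa using hl⟩
  rw [← hlS, coe_eq_coe.2 List.perm_middle, cons_coe]

theorem IsProductOne.of_add_left {S T : Multiset G} (hS : ∀ x ∈ S, x = 1)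
    (h : IsProductOne (S + T)) : IsProductOne T := by
  induction S using Multiset.induction with
  | empty => simpa using h
  | cons x S ih =>
    rw [hS x (mem_cons_self x S), cons_add] at h
    exact ih (fun y hy => hS y (mem_cons_of_mem hy)) h.of_one_cons

end ProductOne

theorem Multiset.exists_split_of_sum_le_add {α ι : Type*} (s : Finset ι)
    (T : ι → Multiset α) {X Y : Multiset α} (h : ∑ i ∈ s, T i ≤ X + Y) :
    ∃ A B : ι → Multiset α,
      (∀ i, A i + B i = T i) ∧ ∑ i ∈ s, A i ≤ X ∧ ∑ i ∈ s, B i ≤ Y := by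
  classical
  induction s using Finset.induction_on generalizing X Y with
  | empty => exact ⟨T, 0, fun i => add_zero _, by simp, by simp⟩
  | insert a s ha ih =>
    rw [Finset.sum_insert ha] at h
    have hcount := le_iff_count.1 h
    simp only [count_add] at hcount
    obtain ⟨A, B, hAB, hA, hB⟩ := ih (X := X - T a ∩ X) (Y := Y - (T a - X)) <| by
      refine le_iff_count.2 fun x => ?_
      have hx := hcount x
      simp only [count_add, count_sub, count_inter]
      omega
    refine ⟨update A a (T a ∩ X), update B a (T a - X), fun i => ?_, ?_, ?_⟩
    · rcases eq_or_ne i a with rfl | hi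
      · ext x
        simp only [update_self, count_add, count_sub, count_inter]
        omega
      · simp only [update_of_ne hi, hAB]
    · rw [Finset.sum_insert ha, update_self, Finset.sum_update_of_notMem ha]
      refine le_iff_count.2 fun x => ?_
      have hAx := le_iff_count.1 hA x
      simp only [count_add, count_sub, count_inter] at hAx ⊢
      omega
    · rw [Finset.sum_insert ha, update_self, Finset.sum_update_of_notMem ha]
      refine le_iff_count.2 fun x => ?_
      have hBx := le_iff_count.1 hB x
      have hx := hcount x
      simp only [count_add, count_sub] at hBx ⊢
      omega

section Divides

variable {G H : Type*} [Group G] [Group H]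

theorem not_dividesKProducts_zero {m : ℕ} (hm : 0 < m) :
    ¬ DividesKProducts m (0 : Multiset G) := by
  rintro ⟨T, hT, hT0⟩
  exact (hT ⟨0, hm⟩).1 <| le_zero_iff.1 <|
    (Finset.single_le_sum_of_canonicallyOrdered (Finset.mem_univ _)).trans hT0

theorem dividesKProducts_of_le_card {ι : Type*} {k : ℕ} {S : Multiset G} (s : Finset ι)
    (T : ι → Multiset G) (hT : ∀ i ∈ s, T i ≠ 0 ∧ IsProductOne (T i)) (hk : k ≤ s.card)
    (hS : ∑ i ∈ s, T i ≤ S) : DividesKProducts k S := by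
  obtain ⟨t, hts, rfl⟩ := Finset.exists_subset_card_eq hk
  refine ⟨fun i => T (t.equivFin.symm i), fun i => hT _ (hts (t.equivFin.symm i).2), ?_⟩
  calc ∑ i, T (t.equivFin.symm i) = ∑ i ∈ t, T i := by
        rw [← Finset.sum_coe_sort t]; exact t.equivFin.symm.sum_comp (T ·)
    _ ≤ ∑ i ∈ s, T i := Finset.sum_le_sum_of_subset hts
    _ ≤ S := hS

theorem DividesKProducts.of_map_of_injective {k : ℕ} {f : G →* H} (hf : Injective f)
    {S : Multiset G} (h : DividesKProducts k (S.map f)) : DividesKProducts k S := by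
  obtain ⟨T, hT, hTS⟩ := h
  have hlift (i) : ((T i).map (invFun f)).map f = T i :=
    map_map_invFun_of_le_map <|
      (Finset.single_le_sum_of_canonicallyOrdered (Finset.mem_univ i)).trans hTS
  refine ⟨fun i => (T i).map (invFun f), fun i => ⟨?_, ?_⟩, ?_⟩
  · exact mt map_eq_zero.1 (hT i).1
  · exact IsProductOne.of_map_of_injective hf (by rw [hlift]; exact (hT i).2)
  · calc ∑ i, (T i).map (invFun f) = (∑ i, T i).map (invFun f) := (map_finsetSum _ _ _).symm
      _ ≤ (S.map f).map (invFun f) := map_le_map hTS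
      _ = S := by rw [map_map, invFun_comp hf, map_id]

theorem DividesKProducts.or_of_add {k l m : ℕ} {π : G →* H} {X Y : Multiset G}
    (hX : ∀ x ∈ X, π x = 1) (hm : k + l ≤ m + 1) (h : DividesKProducts m (X + Y)) :
    DividesKProducts k X ∨ DividesKProducts l (Y.map π) := by
  classical
  obtain ⟨T, hT, hTXY⟩ := h
  obtain ⟨A, B, hAB, hAX, hBY⟩ := exists_split_of_sum_le_add Finset.univ T hTXY
  have hA : ∀ i, A i ≤ X := fun i =>
    (Finset.single_le_sum_of_canonicallyOrdered (Finset.mem_univ i)).trans hAX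
  set J := Finset.univ.filter fun i => B i ≠ 0
  by_cases hJ : l ≤ J.card
  · refine .inr <|
      dividesKProducts_of_le_card J (fun i => (B i).map π) (fun i hi => ⟨?_, ?_⟩) hJ ?_
    · exact mt map_eq_zero.1 (Finset.mem_filter.1 hi).2
    · refine IsProductOne.of_add_left (S := (A i).map π) ?_ ?_
      · intro y hy
        obtain ⟨x, hx, rfl⟩ := mem_map.1 hy
        exact hX x (mem_of_le (hA i) hx)
      · rw [← Multiset.map_add, hAB]; exact (hT i).2.map π
    · calc ∑ i ∈ J, (B i).map π
          ≤ ∑ i, (B i).map π := Finset.sum_le_sum_of_subset J.subset_univ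
        _ = (∑ i, B i).map π := (map_finsetSum _ _ _).symm
        _ ≤ Y.map π := map_le_map hBY
  · refine .inl (dividesKProducts_of_le_card Jᶜ T (fun i _ => hT i) ?_ ?_)
    · rw [Finset.card_compl, Fintype.card_fin]; omega
    · calc ∑ i ∈ Jᶜ, T i = ∑ i ∈ Jᶜ, A i := Finset.sum_congr rfl fun i hi => by
            rw [← hAB i, show B i = 0 by simpa [J] using hi, add_zero]
        _ ≤ ∑ i, A i := Finset.sum_le_sum_of_subset Jᶜ.subset_univ
        _ ≤ X := hAX

end Divides

section Finite

variable {G : Type*} [Group G] [Finite G]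

-- A crude bound: only the finiteness of `d_m(G)` matters here.
theorem dividesKProducts_of_card_lt {m : ℕ} {S : Multiset G}
    (h : Nat.card G * (m * Nat.card G) < card S) : DividesKProducts m S := by
  classical
  obtain ⟨g, hg⟩ : ∃ g, m * Nat.card G < count g S := by
    by_contra! hle
    have hsum := Finset.sum_le_card_nsmul S.toFinset (count · S) _ fun g _ => hle g
    rw [toFinset_sum_count_eq, smul_eq_mul] at hsum
    have hsupp : S.toFinset.card ≤ Nat.card G := by
      simpa using Set.ncard_le_card (S.toFinset : Set G)
    have := Nat.mul_le_mul_right (m * Nat.card G) hsupp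
    omega
  refine ⟨fun _ => replicate (orderOf g) g, fun _ => ⟨?_, ?_⟩, ?_⟩
  · exact mt card_eq_zero.2 (by simpa using (orderOf_pos g).ne')
  · exact ⟨List.replicate (orderOf g) g, rfl, by rw [List.prod_replicate, pow_orderOf_eq_one]⟩
  · rw [Finset.sum_const, Finset.card_fin, nsmul_replicate, ← le_count_iff_replicate_le]
    exact (Nat.mul_le_mul_left m orderOf_le_card).trans hg.le

theorem bddAbove_card_not_dividesKProducts (m : ℕ) :
    BddAbove {n : ℕ | ∃ S : Multiset G, ¬ DividesKProducts m S ∧ card S = n} := by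
  refine ⟨Nat.card G * (m * Nat.card G), ?_⟩
  rintro _ ⟨S, hS, rfl⟩
  exact not_lt.1 (mt dividesKProducts_of_card_lt hS)

theorem card_le_smalldk {m : ℕ} {S : Multiset G} (h : ¬ DividesKProducts m S) :
    card S ≤ smalldk G m :=
  le_csSup (bddAbove_card_not_dividesKProducts m) ⟨S, h, rfl⟩

theorem exists_card_eq_smalldk {m : ℕ} (hm : 0 < m) :
    ∃ S : Multiset G, ¬ DividesKProducts m S ∧ card S = smalldk G m := by
  refine Nat.sSup_mem ?_ (bddAbove_card_not_dividesKProducts m)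
  exact ⟨0, 0, not_dividesKProducts_zero hm, rfl⟩

end Finite

/-- For a normal subgroup `N` of a finite group `G` and `k, ℓ ≥ 1`,
`d_k(N) + d_ℓ(G/N) ≤ d_{k+ℓ-1}(G)`. -/
theorem stmt9 {G : Type*} [Group G] [Finite G] (N : Subgroup G) [N.Normal]
    (k l : ℕ) (hk : 1 ≤ k) (hl : 1 ≤ l) :
    smalldk ↥N k + smalldk (G ⧸ N) l ≤ smalldk G (k + l - 1) := by
  obtain ⟨S₁, hS₁, hcard₁⟩ := exists_card_eq_smalldk (G := N) hk
  obtain ⟨S₂, hS₂, hcard₂⟩ := exists_card_eq_smalldk (G := G ⧸ N) hl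
  have hlift : (S₂.map Quotient.out).map (QuotientGroup.mk' N) = S₂ := by
    simp [map_map]
  have hS : ¬ DividesKProducts (k + l - 1) (S₁.map N.subtype + S₂.map Quotient.out) := by
    intro h
    rcases h.or_of_add (k := k) (l := l) (π := QuotientGroup.mk' N)
      (by simp +contextual) (by omega) with h₁ | h₂
    · exact hS₁ (h₁.of_map_of_injective N.subtype_injective)
    · exact hS₂ (hlift ▸ h₂)
  calc smalldk N k + smalldk (G ⧸ N) l
      = card (S₁.map N.subtype + S₂.map Quotient.out) := by simp [hcard₁, hcard₂]
    _ ≤ smalldk G (k + l - 1) := card_le_smalldk hS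
end

section
/- Let G be a finite group, H ≤ G a subgroup, and k ∈ ℕ. Then D_k(G) ≤ [G : H] · D_k(H), where [G : H] is the index of H in G. -/
/-!
Order a product-one sequence `S` over `G` as a list `l` with product one, and fix a left coset
`b` of `H`. Cutting `l` cyclically after every prefix whose product lies in `b` splits it into
blocks whose products lie in `H`; read in cyclic order these products multiply to one. A
factorization of this sequence over `H` into `t` product-one pieces lifts to a factorization of
`S` into `t` pieces, so there are at most `D_k(H)` cuts for each coset, and every prefix is a cut
for exactly one of the `[G : H]` cosets. For `H = ⊥` the same count gives `|S| ≤ |G| k`, which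
is what makes `D_k` finite.
-/

namespace Multiset

variable {α β : Type*} {f : α → β}

theorem exists_add_eq_of_add_eq_map :
    ∀ {t r : Multiset β} {s : Multiset α}, t + r = s.map f →
      ∃ u v : Multiset α, u + v = s ∧ u.map f = t ∧ v.map f = r := by
  classical
  intro t
  induction t using Multiset.induction with
  | empty => exact fun {r s} h => ⟨0, s, zero_add s, map_zero f, by rw [← h, zero_add]⟩
  | cons b t ih =>
    intro r s h
    rw [cons_add] at h
    obtain ⟨a, ha, rfl, hrest⟩ := (map_eq_cons f s _ b).mpr h.symm
    obtain ⟨u, v, huv, rfl, rfl⟩ := ih hrest.symm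
    exact ⟨a ::ₘ u, v, by rw [cons_add, huv, cons_erase ha], map_cons f a u, rfl⟩

theorem exists_fin_sum_eq_of_sum_eq_map :
    ∀ {m : ℕ} {t : Fin m → Multiset β} {s : Multiset α}, ∑ i, t i = s.map f →
      ∃ u : Fin m → Multiset α, ∑ i, u i = s ∧ ∀ i, (u i).map f = t i := by
  intro m
  induction m with
  | zero =>
    intro t s h
    refine ⟨fun _ => 0, ?_, fun i => i.elim0⟩
    rw [Finset.univ_eq_empty, Finset.sum_empty] at h ⊢
    exact (map_eq_zero.mp h.symm).symm
  | succ m ih =>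
    intro t s h
    rw [Fin.sum_univ_succ] at h
    obtain ⟨u₀, v, rfl, hu₀, hv⟩ := exists_add_eq_of_add_eq_map h
    obtain ⟨u, hu, hut⟩ := ih hv.symm
    refine ⟨Fin.cons u₀ u, by rw [Fin.sum_univ_succ]; simp [hu], Fin.cases ?_ ?_⟩
    · simpa using hu₀
    · simpa using hut

theorem exists_list_of_map_eq_coe :
    ∀ {l : List β} {s : Multiset α}, s.map f = l →
      ∃ l' : List α, (l' : Multiset α) = s ∧ l'.map f = l := by
  classical
  intro l
  induction l with
  | nil => exact fun {s} h => ⟨[], (map_eq_zero.mp h).symm, rfl⟩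
  | cons b l ih =>
    intro s h
    obtain ⟨a, ha, rfl, hrest⟩ := (map_eq_cons f s _ b).mpr (h.trans (cons_coe b l).symm)
    obtain ⟨l', hl', rfl⟩ := ih hrest
    exact ⟨a :: l', by rw [← cons_coe, hl', cons_erase ha], rfl⟩

end Multiset

namespace MaxFactLe

variable {G K : Type*} [Group G] [Group K] {k : ℕ}

theorem zero : MaxFactLe k (0 : Multiset G) := by
  intro m f hf hsum
  cases m with
  | zero => exact Nat.zero_le k
  | succ m => exact absurd (Finset.sum_eq_zero_iff.mp hsum 0 (Finset.mem_univ _)) (hf 0).1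

theorem card_le_of_forall_eq_one {S : Multiset G} (hS : MaxFactLe k S) (h1 : ∀ g ∈ S, g = 1) :
    Multiset.card S ≤ k := by
  refine hS _ (fun _ => {1})
    (fun _ => ⟨Multiset.singleton_ne_zero 1, [1], rfl, List.prod_singleton⟩) ?_
  rw [Finset.sum_const, Finset.card_univ, Fintype.card_fin, Multiset.nsmul_singleton]
  exact (Multiset.eq_replicate.mpr ⟨rfl, h1⟩).symm

theorem of_map (φ : K →* G) {T : Multiset K} (h : MaxFactLe k (T.map φ)) : MaxFactLe k T := by
  intro m f hf hsum
  refine h m (fun i => (f i).map φ) (fun i => ⟨?_, ?_⟩) ?_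
  · exact fun h0 => (hf i).1 (Multiset.map_eq_zero.mp h0)
  · obtain ⟨l, hl, hprod⟩ := (hf i).2
    refine ⟨l.map φ, by rw [← hl, Multiset.map_coe], ?_⟩
    rw [← map_list_prod, hprod, map_one]
  · rw [← hsum]
    exact (map_sum (Multiset.mapAddMonoidHom φ) f Finset.univ).symm

/-- A factorization of the block products lifts to a factorization of the concatenated blocks. -/
theorem map_prod {B : List (List G)} (hB : ∀ w ∈ B, w ≠ [])
    (h : MaxFactLe k (B.flatten : Multiset G)) :
    MaxFactLe k (B.map List.prod : Multiset G) := by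
  intro m f hf hsum
  rw [← Multiset.map_coe] at hsum
  obtain ⟨V, hV, hVf⟩ := Multiset.exists_fin_sum_eq_of_sum_eq_map hsum
  refine h m (fun i => ((V i).map (↑)).join) (fun i => ⟨?_, ?_⟩) ?_
  · have hVi : V i ≠ 0 := fun h0 => (hf i).1 (by rw [← hVf i, h0, Multiset.map_zero])
    obtain ⟨w, hw⟩ := Multiset.exists_mem_of_ne_zero hVi
    have hwB : w ∈ B := by
      rw [← Multiset.mem_coe, ← hV]
      exact Multiset.mem_of_le
        (Finset.single_le_sum (fun j _ => zero_le) (Finset.mem_univ i)) hw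
    intro h0
    have hw0 : (w : Multiset G) = 0 :=
      Multiset.sum_eq_zero_iff.mp h0 w (Multiset.mem_map_of_mem _ hw)
    exact hB w hwB ((Multiset.coe_eq_zero w).mp hw0)
  · obtain ⟨l, hl, hprod⟩ := (hf i).2
    obtain ⟨lw, hlw, hlwl⟩ := Multiset.exists_list_of_map_eq_coe ((hVf i).trans hl.symm)
    refine ⟨lw.flatten, ?_, ?_⟩
    · rw [← Multiset.coe_join, ← Multiset.map_coe, hlw]
    · rw [List.prod_flatten, hlwl, hprod]
  · rw [← Multiset.coe_join, ← Multiset.map_coe, ← hV]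
    exact (map_sum (Multiset.sumAddMonoidHom.comp
      (Multiset.mapAddMonoidHom ((↑) : List G → Multiset G))) V _).symm

end MaxFactLe

section PrefixCosets

variable {G : Type*} [Group G] (H : Subgroup G)

open Classical in
/-- The number of nonempty prefixes `l₁ ⋯ lᵢ` of `l` with `a * l₁ ⋯ lᵢ ∈ b`. -/
noncomputable def prefixCosetCount (b : G ⧸ H) : G → List G → ℕ
  | _, [] => 0
  | a, x :: l => (if ((a * x : G) : G ⧸ H) = b then 1 else 0) + prefixCosetCount b (a * x) l

theorem sum_prefixCosetCount [Fintype (G ⧸ H)] (a : G) (l : List G) :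
    ∑ b : G ⧸ H, prefixCosetCount H b a l = l.length := by
  induction l generalizing a with
  | nil => simp [prefixCosetCount]
  | cons x l ih =>
    classical
    simp only [prefixCosetCount, Finset.sum_add_distrib, ih, List.length_cons]
    simp [Finset.sum_ite_eq, add_comm]

theorem length_le_index_mul [Finite (G ⧸ H)] {l : List G} {c : ℕ}
    (hc : ∀ b : G ⧸ H, prefixCosetCount H b 1 l ≤ c) : l.length ≤ H.index * c := by
  have := Fintype.ofFinite (G ⧸ H)
  calc l.length = ∑ b : G ⧸ H, prefixCosetCount H b 1 l := (sum_prefixCosetCount H 1 l).symm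
    _ ≤ ∑ _b : G ⧸ H, c := Finset.sum_le_sum fun b _ => hc b
    _ = H.index * c := by
      rw [Finset.sum_const, Finset.card_univ, smul_eq_mul, Subgroup.index, Nat.card_eq_fintype_card]

/-- Cut `l` after each prefix landing in `b`: `pre` ends at the first cut and `L` lists the pieces
between consecutive cuts, whose products lie in `H` because both ends lie in the same coset. -/
theorem exists_blocks_of_prefixCosetCount_pos {b : G ⧸ H} {a : G} {l : List G}
    (h : 0 < prefixCosetCount H b a l) :
    ∃ (pre : List G) (L : List (List G)) (r : List G),
      l = pre ++ L.flatten ++ r ∧ pre ≠ [] ∧ ((a * pre.prod : G) : G ⧸ H) = b ∧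
      (∀ w ∈ L, w ≠ [] ∧ w.prod ∈ H) ∧ L.length + 1 = prefixCosetCount H b a l := by
  induction l generalizing a with
  | nil => simp [prefixCosetCount] at h
  | cons x l ih =>
    by_cases hx : ((a * x : G) : G ⧸ H) = b
    · rcases Nat.eq_zero_or_pos (prefixCosetCount H b (a * x) l) with h0 | hpos
      · exact ⟨[x], [], l, by simp, by simp, by simpa using hx, by simp,
          by simp [prefixCosetCount, hx, h0]⟩
      · obtain ⟨pre, L, r, hl, hpre, hb, hL, hcount⟩ := ih hpos
        refine ⟨[x], pre :: L, r, by simp [hl], by simp, by simpa using hx, ?_, ?_⟩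
        · intro w hw
          rcases List.mem_cons.mp hw with rfl | hw
          · exact ⟨hpre, by simpa [mul_assoc] using QuotientGroup.eq.mp (hx.trans hb.symm)⟩
          · exact hL w hw
        · simp only [prefixCosetCount, hx, if_true, ← hcount, List.length_cons]
          omega
    · have hpos : 0 < prefixCosetCount H b (a * x) l := by
        simpa [prefixCosetCount, hx] using h
      obtain ⟨pre, L, r, hl, hpre, hb, hL, hcount⟩ := ih hpos
      exact ⟨x :: pre, L, r, by simp [hl], by simp, by simpa [mul_assoc] using hb, hL,
        by simp [prefixCosetCount, hx, hcount]⟩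

theorem exists_cyclic_blocks {b : G ⧸ H} {l : List G}
    (hl : l.prod = 1) (h : 0 < prefixCosetCount H b 1 l) :
    ∃ B : List (List G), B.flatten.Perm l ∧ (∀ w ∈ B, w ≠ [] ∧ w.prod ∈ H) ∧
      (B.map List.prod).prod = 1 ∧ B.length = prefixCosetCount H b 1 l := by
  obtain ⟨pre, L, r, rfl, hpre, -, hL, hcount⟩ := exists_blocks_of_prefixCosetCount_pos H h
  have hflat : (L ++ [r ++ pre]).flatten = L.flatten ++ r ++ pre := by simp
  have hrot : (L.flatten ++ r ++ pre).prod = 1 := by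
    rw [List.prod_append, List.prod_append, mul_assoc] at hl
    rw [List.prod_append, List.prod_append]
    exact mul_eq_one_comm.mp hl
  have hLH : L.flatten.prod ∈ H := by
    rw [List.prod_flatten]
    exact Subgroup.list_prod_mem H fun _ hg => by
      obtain ⟨w, hw, rfl⟩ := List.mem_map.mp hg
      exact (hL w hw).2
  have hwrap : (r ++ pre).prod = L.flatten.prod⁻¹ := by
    rw [List.append_assoc, List.prod_append] at hrot
    exact eq_inv_of_mul_eq_one_right hrot
  -- the piece after the last cut wraps around to the first cut
  refine ⟨L ++ [r ++ pre], ?_, ?_, ?_, by simp [hcount]⟩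
  · rw [hflat, List.append_assoc _ L.flatten]
    exact List.perm_append_comm
  · intro w hw
    rcases List.mem_append.mp hw with hw | hw
    · exact hL w hw
    · rw [List.mem_singleton.mp hw, hwrap]
      exact ⟨by simp [hpre], inv_mem hLH⟩
  · rw [← List.prod_flatten, hflat, hrot]

theorem exists_subgroup_seq_of_maxFactLe (b : G ⧸ H) {k : ℕ} {l : List G} (hl : l.prod = 1)
    (hS : MaxFactLe k (l : Multiset G)) :
    ∃ T : List G, (∀ g ∈ T, g ∈ H) ∧ T.prod = 1 ∧ MaxFactLe k (T : Multiset G) ∧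
      T.length = prefixCosetCount H b 1 l := by
  rcases Nat.eq_zero_or_pos (prefixCosetCount H b 1 l) with h0 | hpos
  · exact ⟨[], by simp, rfl, MaxFactLe.zero, h0.symm⟩
  obtain ⟨B, hperm, hB, hprod, hlen⟩ := exists_cyclic_blocks H hl hpos
  refine ⟨B.map List.prod, ?_, hprod, ?_, by rw [List.length_map, hlen]⟩
  · intro g hg
    obtain ⟨w, hw, rfl⟩ := List.mem_map.mp hg
    exact (hB w hw).2
  · exact MaxFactLe.map_prod (fun w hw => (hB w hw).1)
      (by rwa [Multiset.coe_eq_coe.mpr hperm])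

end PrefixCosets

theorem card_le_of_maxFactLe {G : Type*} [Group G] [Finite G] {k : ℕ} {S : Multiset G}
    (hS₁ : IsProductOne S) (hS : MaxFactLe k S) : Multiset.card S ≤ Nat.card G * k := by
  obtain ⟨l, rfl, hl⟩ := hS₁
  rw [Multiset.coe_card, ← Subgroup.index_bot]
  refine length_le_index_mul ⊥ fun b => ?_
  obtain ⟨T, hTbot, -, hT, hlen⟩ := exists_subgroup_seq_of_maxFactLe ⊥ b hl hS
  rw [← hlen, ← Multiset.coe_card]
  exact hT.card_le_of_forall_eq_one fun g hg => Subgroup.mem_bot.mp (hTbot g hg)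

theorem bddAbove_largeDk_set (G : Type*) [Group G] [Finite G] (k : ℕ) :
    BddAbove
      {n : ℕ | ∃ S : Multiset G, IsProductOne S ∧ MaxFactLe k S ∧ Multiset.card S = n} :=
  ⟨Nat.card G * k, by
    rintro _ ⟨S, hS₁, hS, rfl⟩
    exact card_le_of_maxFactLe hS₁ hS⟩

theorem prefixCosetCount_le_largeDk {G : Type*} [Group G] [Finite G] (H : Subgroup G)
    (b : G ⧸ H) {k : ℕ} {l : List G} (hl : l.prod = 1) (hS : MaxFactLe k (l : Multiset G)) :
    prefixCosetCount H b 1 l ≤ largeDk H k := by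
  obtain ⟨T, hTH, hT₁, hT, hlen⟩ := exists_subgroup_seq_of_maxFactLe H b hl hS
  lift T to List H using hTH
  rw [← hlen, List.length_map]
  refine le_csSup (bddAbove_largeDk_set H k) ⟨T, ⟨T, rfl, ?_⟩, ?_, Multiset.coe_card T⟩
  · exact Subtype.val_injective (by rw [Subgroup.val_list_prod, hT₁]; rfl)
  · exact MaxFactLe.of_map H.subtype (by rwa [Multiset.map_coe])

theorem stmt13_general {G : Type*} [Group G] [Finite G] (H : Subgroup G) (k : ℕ) :
    largeDk G k ≤ H.index * largeDk ↥H k := by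
  refine csSup_le' ?_
  rintro _ ⟨S, ⟨l, rfl, hl⟩, hS, rfl⟩
  exact length_le_index_mul H fun b => prefixCosetCount_le_largeDk H b hl hS

/-- For a subgroup `H` of a finite group `G` and `k ≥ 1`, `D_k(G) ≤ [G : H] · D_k(H)`. -/
theorem stmt13 {G : Type*} [Group G] [Finite G] (H : Subgroup G) (k : ℕ) (hk : 1 ≤ k) :
    largeDk G k ≤ H.index * largeDk ↥H k :=
  stmt13_general H k
end
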